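/- Let X be a real Hilbert space, let C₁,…,C_m ⊆ X be nonempty closed convex sets with nonempty intersection C = C₁ ∩ ⋯ ∩ C_m, and let d ∈ X satisfy P_C(d) = 0. If y = (y₁,…,y_m) ∈ Xᵐ is a minimizer of v (i.e., v(y) ≤ v(y') for all y' ∈ Xᵐ), then d − Σ_{i=1}^m y_i = P_C(d) = 0, i.e., d − Σ_{i=1}^m y_i is the solution of the best approximation problem min_{x ∈ C} ½‖x − d‖². (Theorem 3.1(3).) -/

import Mathlib

/-! Write `s = ∑ yᵢ` and `u = d - s`, so that `d = u + s`, and `v = dualFn`. Moving one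
coordinate, `yⱼ ↦ yⱼ + t z` with `δ*(z, Cⱼ) ≤ r`, and letting `t → 0⁺` in `v(y) ≤ v(y')` gives
`⟪z, u⟫ ≤ r`; by Hahn–Banach this puts `u` in every `Cⱼ`. Shrinking, `y ↦ (1 - ε) y`, gives
`⟪u, s⟫ ≥ ∑ δ*(yᵢ, Cᵢ) ≥ 0`, the last step because `0 ∈ Cᵢ`. As `u ∈ C` and `0` is nearest
to `d` in `C`, `‖u + s‖ ≤ ‖s‖`, which together with `⟪u, s⟫ ≥ 0` forces `u = 0`.
The support values at the minimizer are finite since `v(y) ≤ v(0) = ½‖d‖²`. -/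

open scoped RealInnerProductSpace

/-- The support function `δ*(z, D) = sup_{x ∈ D} ⟪z, x⟫`, with values in `EReal`. -/
noncomputable def suppFn {X : Type*} [NormedAddCommGroup X] [InnerProductSpace ℝ X]
    (z : X) (D : Set X) : EReal :=
  ⨆ x ∈ D, ((⟪z, x⟫ : ℝ) : EReal)

open Filter Topology

theorem EReal.coe_finset_sum {ι : Type*} (s : Finset ι) (f : ι → ℝ) :
    ((∑ i ∈ s, f i : ℝ) : EReal) = ∑ i ∈ s, (f i : EReal) :=
  map_sum (⟨⟨Real.toEReal, EReal.coe_zero⟩, EReal.coe_add⟩ : ℝ →+ EReal) f s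

theorem Real.nonneg_of_forall_mul_add_sq_nonneg {a b : ℝ}
    (h : ∀ t, 0 < t → t ≤ 1 → 0 ≤ t * a + t ^ 2 * b) : 0 ≤ a := by
  have hlim : Tendsto (fun t => a + t * b) (𝓝[>] 0) (𝓝 a) := by
    have : Tendsto (fun t : ℝ => a + t * b) (𝓝 0) (𝓝 (a + 0 * b)) :=
      tendsto_const_nhds.add (tendsto_id.mul_const b)
    simpa using this.mono_left nhdsWithin_le_nhds
  refine ge_of_tendsto hlim ?_
  filter_upwards [Ioc_mem_nhdsGT one_pos] with t ⟨ht0, ht1⟩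
  have := h t ht0 ht1
  exact nonneg_of_mul_nonneg_right (by linarith) ht0

theorem eq_zero_of_norm_add_le_of_inner_nonneg {X : Type*} [NormedAddCommGroup X]
    [InnerProductSpace ℝ X] {u s : X} (hus : 0 ≤ ⟪u, s⟫) (h : ‖u + s‖ ≤ ‖s‖) : u = 0 := by
  have hsq : ‖u + s‖ ^ 2 ≤ ‖s‖ ^ 2 := pow_le_pow_left₀ (norm_nonneg _) h 2
  rw [norm_add_sq_real] at hsq
  have hu : ‖u‖ ^ 2 = 0 := le_antisymm (by linarith) (by positivity)
  simpa using hu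

section SupportFunction

variable {X : Type*} [NormedAddCommGroup X] [InnerProductSpace ℝ X] {D : Set X} {z w x : X}

theorem inner_le_suppFn (hx : x ∈ D) : ((⟪z, x⟫ : ℝ) : EReal) ≤ suppFn z D :=
  le_iSup₂ (f := fun x (_ : x ∈ D) => ((⟪z, x⟫ : ℝ) : EReal)) x hx

theorem suppFn_le_coe {c : ℝ} (h : ∀ x ∈ D, ⟪z, x⟫ ≤ c) : suppFn z D ≤ c :=
  iSup₂_le fun x hx => EReal.coe_le_coe_iff.mpr (h x hx)

theorem inner_le_of_suppFn_le {c : ℝ} (h : suppFn z D ≤ c) (hx : x ∈ D) : ⟪z, x⟫ ≤ c :=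
  EReal.coe_le_coe_iff.mp ((inner_le_suppFn hx).trans h)

theorem suppFn_smul_le {t c : ℝ} (ht : 0 ≤ t) (h : suppFn z D ≤ c) :
    suppFn (t • z) D ≤ (t * c : ℝ) :=
  suppFn_le_coe fun x hx => by
    rw [real_inner_smul_left]
    exact mul_le_mul_of_nonneg_left (inner_le_of_suppFn_le h hx) ht

theorem suppFn_add_le {a b : ℝ} (hz : suppFn z D ≤ a) (hw : suppFn w D ≤ b) :
    suppFn (z + w) D ≤ (a + b : ℝ) :=
  suppFn_le_coe fun x hx => by
    rw [inner_add_left]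
    exact add_le_add (inner_le_of_suppFn_le hz hx) (inner_le_of_suppFn_le hw hx)

theorem suppFn_zero_le : suppFn (0 : X) D ≤ (0 : ℝ) :=
  suppFn_le_coe fun x _ => (inner_zero_left x).le

theorem mem_of_forall_suppFn_le [CompleteSpace X] (hcv : Convex ℝ D) (hcl : IsClosed D)
    (h : ∀ (z : X) (r : ℝ), suppFn z D ≤ r → ⟪z, x⟫ ≤ r) : x ∈ D := by
  by_contra hx
  obtain ⟨f, r, hfD, hfx⟩ := geometric_hahn_banach_closed_point hcv hcl hx
  have hf : ∀ x, ⟪(InnerProductSpace.toDual ℝ X).symm f, x⟫ = f x := fun _ =>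
    InnerProductSpace.toDual_symm_apply
  have := h _ r (suppFn_le_coe fun x hx => (hf x).trans_le (hfD x hx).le)
  rw [hf] at this
  linarith

end SupportFunction

section DualFunction

variable {X : Type*} [NormedAddCommGroup X] [InnerProductSpace ℝ X] {ι : Type*} [Fintype ι]
  {d : X} {C : ι → Set X} {y : ι → X} {T : ι → ℝ}

noncomputable def dualFn (d : X) (C : ι → Set X) (y : ι → X) : EReal :=
  ((1 / 2 * ‖d - ∑ i, y i‖ ^ 2 : ℝ) : EReal) + ∑ i, suppFn (y i) (C i)

theorem dualFn_le_coe {c : ι → ℝ} (hc : ∀ i, suppFn (y i) (C i) ≤ c i) :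
    dualFn d C y ≤ ((1 / 2 * ‖d - ∑ i, y i‖ ^ 2 + ∑ i, c i : ℝ) : EReal) := by
  rw [EReal.coe_add, EReal.coe_finset_sum]
  exact add_le_add le_rfl (Finset.sum_le_sum fun i _ => hc i)

theorem coe_le_dualFn {c : ι → ℝ} (hc : ∀ i, (c i : EReal) ≤ suppFn (y i) (C i)) :
    ((1 / 2 * ‖d - ∑ i, y i‖ ^ 2 + ∑ i, c i : ℝ) : EReal) ≤ dualFn d C y := by
  rw [EReal.coe_add, EReal.coe_finset_sum]
  exact add_le_add le_rfl (Finset.sum_le_sum fun i _ => hc i)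

theorem exists_suppFn_eq_coe_of_minimizer (h0 : ∀ i, (0 : X) ∈ C i)
    (hmin : ∀ y', dualFn d C y ≤ dualFn d C y') :
    ∃ T : ι → ℝ, ∀ i, suppFn (y i) (C i) = T i := by
  have hnonneg : ∀ i, (0 : EReal) ≤ suppFn (y i) (C i) := fun i => by
    simpa using inner_le_suppFn (z := y i) (h0 i)
  have hbound : ∀ i, suppFn (y i) (C i) ≤ ((1 / 2 * ‖d‖ ^ 2 + ∑ _ : ι, 0 : ℝ) : EReal) := by
    intro i
    calc suppFn (y i) (C i) ≤ ∑ j, suppFn (y j) (C j) :=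
          Finset.single_le_sum (fun j _ => hnonneg j) (Finset.mem_univ i)
      _ ≤ dualFn d C y := le_add_of_nonneg_left (EReal.coe_nonneg.mpr (by positivity))
      _ ≤ dualFn d C 0 := hmin 0
      _ ≤ _ := by simpa using dualFn_le_coe (d := d) (y := 0) fun i => suppFn_zero_le (D := C i)
  refine ⟨fun i => (suppFn (y i) (C i)).toReal, fun i => (EReal.coe_toReal ?_ ?_).symm⟩
  · exact ((hbound i).trans_lt (EReal.coe_lt_top _)).ne
  · exact ((EReal.bot_lt_zero).trans_le (hnonneg i)).ne'

theorem dualFn_real_le_of_minimizer (hT : ∀ i, suppFn (y i) (C i) = T i)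
    (hmin : ∀ y', dualFn d C y ≤ dualFn d C y') {y' : ι → X} {c : ι → ℝ}
    (hc : ∀ i, suppFn (y' i) (C i) ≤ c i) :
    1 / 2 * ‖d - ∑ i, y i‖ ^ 2 + ∑ i, T i ≤ 1 / 2 * ‖d - ∑ i, y' i‖ ^ 2 + ∑ i, c i :=
  EReal.coe_le_coe_iff.mp <|
    (coe_le_dualFn fun i => (hT i).ge).trans ((hmin y').trans (dualFn_le_coe hc))

theorem sum_le_inner_of_minimizer (hT : ∀ i, suppFn (y i) (C i) = T i)
    (hmin : ∀ y', dualFn d C y ≤ dualFn d C y') :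
    ∑ i, T i ≤ ⟪d - ∑ i, y i, ∑ i, y i⟫ := by
  set s := ∑ i, y i
  have key : ∀ ε, 0 < ε → ε ≤ 1 →
      0 ≤ ε * (⟪d - s, s⟫ - ∑ i, T i) + ε ^ 2 * (‖s‖ ^ 2 / 2) := by
    intro ε _ hε1
    have h := dualFn_real_le_of_minimizer hT hmin (y' := fun i => (1 - ε) • y i)
      (c := fun i => (1 - ε) * T i) fun i => suppFn_smul_le (sub_nonneg.2 hε1) (hT i).le
    rw [← Finset.smul_sum, ← Finset.mul_sum, show d - (1 - ε) • s = (d - s) + ε • s by module,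
      norm_add_sq_real, norm_smul, inner_smul_right, Real.norm_of_nonneg (by linarith)] at h
    linarith
  linarith [Real.nonneg_of_forall_mul_add_sq_nonneg key]

theorem sub_sum_mem_of_minimizer [CompleteSpace X] {j : ι}
    (hcv : Convex ℝ (C j)) (hcl : IsClosed (C j)) (hT : ∀ i, suppFn (y i) (C i) = T i)
    (hmin : ∀ y', dualFn d C y ≤ dualFn d C y') :
    d - ∑ i, y i ∈ C j := by
  classical
  set s := ∑ i, y i with hs
  refine mem_of_forall_suppFn_le hcv hcl fun z r hzr => ?_
  have key : ∀ t, 0 < t → t ≤ 1 → 0 ≤ t * (r - ⟪z, d - s⟫) + t ^ 2 * (‖z‖ ^ 2 / 2) := by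
    intro t ht _
    have hc : ∀ i, suppFn ((y + Pi.single j (t • z) : ι → X) i) (C i)
        ≤ ((T + Pi.single j (t * r) : ι → ℝ) i : ℝ) := by
      intro i
      rcases eq_or_ne i j with rfl | hij
      · simpa using suppFn_add_le (hT i).le (suppFn_smul_le ht.le hzr)
      · simpa [hij] using (hT i).le
    have h := dualFn_real_le_of_minimizer hT hmin hc
    simp only [Pi.add_apply, Finset.sum_add_distrib, Finset.sum_pi_single', Finset.mem_univ,
      if_true, ← hs] at h
    rw [show d - (s + t • z) = (d - s) - t • z by abel, norm_sub_sq_real (d - s),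
      norm_smul, inner_smul_right, Real.norm_of_nonneg ht.le, real_inner_comm] at h
    linarith
  linarith [Real.nonneg_of_forall_mul_add_sq_nonneg key]

end DualFunction

theorem dual_minimizer_gives_primal_BAP_general {X : Type*} [NormedAddCommGroup X]
    [InnerProductSpace ℝ X] [CompleteSpace X] {m : ℕ} (C : Fin m → Set X) (d : X)
    (hCcl : ∀ i, IsClosed (C i)) (hCcv : ∀ i, Convex ℝ (C i))
    (hmem : (0 : X) ∈ ⋂ i, C i)
    (hproj : ∀ x ∈ ⋂ i, C i, ‖d - (0 : X)‖ ≤ ‖d - x‖)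
    (y : Fin m → X)
    (hmin : ∀ y' : Fin m → X,
      ((1 / 2 * ‖d - ∑ i, y i‖ ^ 2 : ℝ) : EReal) + ∑ i, suppFn (y i) (C i) ≤
      ((1 / 2 * ‖d - ∑ i, y' i‖ ^ 2 : ℝ) : EReal) + ∑ i, suppFn (y' i) (C i)) :
    d - ∑ i, y i = 0 := by
  have h0 : ∀ i, (0 : X) ∈ C i := Set.mem_iInter.mp hmem
  obtain ⟨T, hT⟩ := exists_suppFn_eq_coe_of_minimizer h0 hmin
  have hT_nonneg : ∀ i, 0 ≤ T i := fun i => by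
    simpa [hT i] using inner_le_suppFn (z := y i) (h0 i)
  have hu : d - ∑ i, y i ∈ ⋂ i, C i :=
    Set.mem_iInter.mpr fun j => sub_sum_mem_of_minimizer (hCcv j) (hCcl j) hT hmin
  refine eq_zero_of_norm_add_le_of_inner_nonneg (s := ∑ i, y i) ?_ (by simpa using hproj _ hu)
  exact (Finset.sum_nonneg fun i _ => hT_nonneg i).trans (sum_le_inner_of_minimizer hT hmin)

/-- Theorem 3.1(3): a dual minimizer recovers the primal solution of the best
approximation problem. -/
theorem dual_minimizer_gives_primal_BAP {X : Type*} [NormedAddCommGroup X]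
    [InnerProductSpace ℝ X] [CompleteSpace X] {m : ℕ} (C : Fin m → Set X) (d : X)
    (hCne : ∀ i, (C i).Nonempty) (hCcl : ∀ i, IsClosed (C i)) (hCcv : ∀ i, Convex ℝ (C i))
    (hmem : (0 : X) ∈ ⋂ i, C i)
    (hproj : ∀ x ∈ ⋂ i, C i, ‖d - (0 : X)‖ ≤ ‖d - x‖)
    (y : Fin m → X)
    (hmin : ∀ y' : Fin m → X,
      ((1 / 2 * ‖d - ∑ i, y i‖ ^ 2 : ℝ) : EReal) + ∑ i, suppFn (y i) (C i) ≤
      ((1 / 2 * ‖d - ∑ i, y' i‖ ^ 2 : ℝ) : EReal) + ∑ i, suppFn (y' i) (C i)) :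
    d - ∑ i, y i = 0 :=
  dual_minimizer_gives_primal_BAP_general C d hCcl hCcv hmem hproj y hmin
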